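/- Let A' be the circulant graph C_12(1,2) with the blocks coloring (red on {0,1,2,6,7,8}, black elsewhere) and B' be C_12(1,2) with the alternating coloring (red on odd vertices, black on even vertices). Then color refinement (1-WL), started from these colorings, does not distinguish A' from B': at every iteration both graphs have the same multiset of vertex colors, namely 6 vertices of one color and 6 of the other, with both colorings being stable. -/

import Mathlib

/-!
Both initial colorings are equitable with the same color-degree profile: in `C₁₂(1,2)` every
vertex has two red and two black neighbours, whatever its own color. So if the colors of
round `t` induce, jointly on the two graphs, the same partition as the initial colorings, then
each round-`t` color is a relabelling `g` of the initial one and the multiset of colors around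
a vertex is the image under `g` of a multiset that depends only on its own initial color.
Refinement therefore never splits a class, and the color multisets of the two graphs, being
images of the equal initial ones under the same `g`, stay equal.
-/

/-- The multiset of colors (under coloring `c`) of the neighbors of `v` in `G`. -/
noncomputable def nbrColors {V : Type*} [Fintype V] (G : SimpleGraph V) (c : V → ℕ) (v : V) :
    Multiset ℕ :=
  letI := Classical.decRel G.Adj
  (G.neighborFinset v).val.map c

/-- `C` is a run of color refinement (1-WL) on `G`: since colors are produced by an
injective `RELABEL` of the pair (old color, multiset of neighbors' old colors), two
vertices get equal new colors iff their pairs agree. -/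
def IsCR {V : Type*} [Fintype V] (G : SimpleGraph V) (C : ℕ → V → ℕ) : Prop :=
  ∀ t v w, C (t + 1) v = C (t + 1) w ↔
    (C t v = C t w ∧ nbrColors G (C t) v = nbrColors G (C t) w)

/-- `CG`, `CH` is a parallel run of color refinement on `G` and `H`, with the injective
`RELABEL` applied consistently across both graphs. -/
def IsParallelCR {V W : Type*} [Fintype V] [Fintype W] (G : SimpleGraph V) (H : SimpleGraph W)
    (CG : ℕ → V → ℕ) (CH : ℕ → W → ℕ) : Prop :=
  IsCR G CG ∧ IsCR H CH ∧
  ∀ t v w, CG (t + 1) v = CH (t + 1) w ↔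
    (CG t v = CH t w ∧ nbrColors G (CG t) v = nbrColors H (CH t) w)

/-- The circulant graph `C₁₂(1,2)` on `ZMod 12`: `i ~ j` iff `i - j ≡ ±1, ±2 (mod 12)`. -/
def C12 : SimpleGraph (ZMod 12) := SimpleGraph.fromRel (fun i j => i - j = 1 ∨ i - j = 2)

/-- The blocks coloring as a ℕ-valued coloring: 1 (red) on `{0,1,2,6,7,8}`, 0 (black) else. -/
def blocksColoring (i : ZMod 12) : ℕ :=
  if i.val = 0 ∨ i.val = 1 ∨ i.val = 2 ∨ i.val = 6 ∨ i.val = 7 ∨ i.val = 8 then 1 else 0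

/-- The alternating coloring as a ℕ-valued coloring: 1 (red) on odd vertices, 0 else. -/
def altColoring (i : ZMod 12) : ℕ := i.val % 2

open Function Setoid

section ColorRefinement

variable {V W : Type*}

/- A coloring of each of two graphs is handled as one coloring `Sum.elim c d` of `V ⊕ W`, so
that "inducing the same partition, consistently across both graphs" is equality of kernels. -/
lemma ker_sumElim_eq_iff {c κ : V → ℕ} {d μ : W → ℕ} :
    ker (Sum.elim c d) = ker (Sum.elim κ μ) ↔
      (∀ v w, c v = c w ↔ κ v = κ w) ∧ (∀ v w, d v = d w ↔ μ v = μ w) ∧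
        (∀ v w, c v = d w ↔ κ v = μ w) := by
  refine ⟨fun h => ⟨fun v w => ?_, fun v w => ?_, fun v w => ?_⟩, fun ⟨hc, hd, hcd⟩ => ?_⟩
  · exact Setoid.ext_iff.1 h (.inl v) (.inl w)
  · exact Setoid.ext_iff.1 h (.inr v) (.inr w)
  · exact Setoid.ext_iff.1 h (.inl v) (.inr w)
  · ext (v | v) (w | w)
    · exact hc v w
    · exact hcd v w
    · exact eq_comm.trans ((hcd w v).trans eq_comm)
    · exact hd v w

lemma exists_comp_of_ker_sumElim_le {c κ : V → ℕ} {d μ : W → ℕ}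
    (h : ker (Sum.elim κ μ) ≤ ker (Sum.elim c d)) : ∃ g : ℕ → ℕ, c = g ∘ κ ∧ d = g ∘ μ := by
  have hf : (Sum.elim c d).FactorsThrough (Sum.elim κ μ) := fun _ _ hxy => h hxy
  exact ⟨extend (Sum.elim κ μ) (Sum.elim c d) 0,
    funext fun v => (hf.extend_apply 0 (.inl v)).symm,
    funext fun w => (hf.extend_apply 0 (.inr w)).symm⟩

variable [Fintype V] [Fintype W]

lemma map_univ_eq_of_ker_sumElim_eq {CA κA : V → ℕ} {CB κB : W → ℕ}
    (h : ker (Sum.elim CA CB) = ker (Sum.elim κA κB))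
    (hκ : Finset.univ.val.map κA = Finset.univ.val.map κB) :
    Finset.univ.val.map CA = Finset.univ.val.map CB := by
  obtain ⟨g, rfl, rfl⟩ := exists_comp_of_ker_sumElim_le h.ge
  rw [← Multiset.map_map, hκ, Multiset.map_map]

lemma nbrColors_comp (G : SimpleGraph V) (g : ℕ → ℕ) (c : V → ℕ) (v : V) :
    nbrColors G (g ∘ c) v = (nbrColors G c v).map g := by
  simp only [nbrColors, Multiset.map_map]

def IsEquitableWith (G : SimpleGraph V) (κ : V → ℕ) (N : ℕ → Multiset ℕ) : Prop :=
  ∀ v, nbrColors G κ v = N (κ v)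

variable {G : SimpleGraph V} {H : SimpleGraph W} {CA : ℕ → V → ℕ} {CB : ℕ → W → ℕ}

lemma IsParallelCR.sumElim_succ_eq_iff (hCR : IsParallelCR G H CA CB) (t : ℕ) (x y : V ⊕ W) :
    Sum.elim (CA (t + 1)) (CB (t + 1)) x = Sum.elim (CA (t + 1)) (CB (t + 1)) y ↔
      Sum.elim (CA t) (CB t) x = Sum.elim (CA t) (CB t) y ∧
        Sum.elim (nbrColors G (CA t)) (nbrColors H (CB t)) x =
          Sum.elim (nbrColors G (CA t)) (nbrColors H (CB t)) y := by
  obtain ⟨hA, hB, hAB⟩ := hCR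
  rcases x with v | v <;> rcases y with w | w
  · exact hA t v w
  · exact hAB t v w
  · simpa only [Sum.elim_inl, Sum.elim_inr, eq_comm] using hAB t w v
  · exact hB t v w

lemma IsParallelCR.ker_succ_eq {κA : V → ℕ} {κB : W → ℕ} {N : ℕ → Multiset ℕ}
    (hCR : IsParallelCR G H CA CB) (hA : IsEquitableWith G κA N) (hB : IsEquitableWith H κB N)
    {t : ℕ} (ht : ker (Sum.elim (CA t) (CB t)) = ker (Sum.elim κA κB)) :
    ker (Sum.elim (CA (t + 1)) (CB (t + 1))) = ker (Sum.elim κA κB) := by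
  obtain ⟨g, hgA, hgB⟩ := exists_comp_of_ker_sumElim_le ht.ge
  have hnbr : Sum.elim (nbrColors G (CA t)) (nbrColors H (CB t)) =
      fun x => (N (Sum.elim κA κB x)).map g := by
    funext x
    rcases x with v | w
    · rw [Sum.elim_inl, hgA, nbrColors_comp, hA, Sum.elim_inl]
    · rw [Sum.elim_inr, hgB, nbrColors_comp, hB, Sum.elim_inr]
  ext x y
  rw [ker_def, hCR.sumElim_succ_eq_iff, hnbr, ← ker_def, ht, ker_def]
  exact and_iff_left_of_imp fun h => congrArg (fun k => (N k).map g) h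

lemma IsParallelCR.ker_eq {κA : V → ℕ} {κB : W → ℕ} {N : ℕ → Multiset ℕ}
    (hCR : IsParallelCR G H CA CB) (hA : IsEquitableWith G κA N) (hB : IsEquitableWith H κB N)
    (h0 : ker (Sum.elim (CA 0) (CB 0)) = ker (Sum.elim κA κB)) (t : ℕ) :
    ker (Sum.elim (CA t) (CB t)) = ker (Sum.elim κA κB) := by
  induction t with
  | zero => exact h0
  | succ t ih => exact hCR.ker_succ_eq hA hB ih

end ColorRefinement

instance : DecidableRel C12.Adj := fun a b =>
  decidable_of_iff _ (SimpleGraph.fromRel_adj (fun i j : ZMod 12 => i - j = 1 ∨ i - j = 2) a b).symm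

lemma C12_adj_iff : ∀ v u : ZMod 12, C12.Adj v u ↔ u ∈ [v + 1, v + 2, v - 1, v - 2] := by
  decide

lemma nbrColors_C12 (c : ZMod 12 → ℕ) (v : ZMod 12) :
    nbrColors C12 c v = {c (v + 1), c (v + 2), c (v - 1), c (v - 2)} := by
  have hnodup : ([v + 1, v + 2, v - 1, v - 2] : List (ZMod 12)).Nodup := by
    revert v; decide
  have hval : ∀ inst : Fintype (C12.neighborSet v),
      (@SimpleGraph.neighborFinset _ C12 v inst).val = ↑[v + 1, v + 2, v - 1, v - 2] := by
    intro inst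
    refine (Multiset.Nodup.ext (Finset.nodup _) (Multiset.coe_nodup.mpr hnodup)).mpr fun u => ?_
    rw [Finset.mem_val, SimpleGraph.mem_neighborFinset, Multiset.mem_coe, C12_adj_iff]
  rw [nbrColors, hval]
  rfl

lemma C12_isEquitableWith_blocksColoring :
    IsEquitableWith C12 blocksColoring fun _ => {0, 0, 1, 1} := by
  intro v
  rw [nbrColors_C12]
  revert v
  decide

lemma C12_isEquitableWith_altColoring :
    IsEquitableWith C12 altColoring fun _ => {0, 0, 1, 1} := by
  intro v
  rw [nbrColors_C12]
  revert v
  decide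

lemma ncard_blocksColoring_class (u : ZMod 12) :
    {v : ZMod 12 | blocksColoring v = blocksColoring u}.ncard = 6 := by
  rw [Set.ncard_eq_toFinset_card']
  revert u
  decide

/-- Color refinement does not distinguish `C₁₂(1,2)` with the blocks coloring from
`C₁₂(1,2)` with the alternating coloring: at every iteration the two graphs have equal
color multisets (6 vertices of one color and 6 of another), and both colorings are
stable under refinement. -/
theorem C12_blocks_alternating_indistinguishable
    (CA CB : ℕ → ZMod 12 → ℕ)
    (h0A : ∀ v w : ZMod 12, CA 0 v = CA 0 w ↔ blocksColoring v = blocksColoring w)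
    (h0B : ∀ v w : ZMod 12, CB 0 v = CB 0 w ↔ altColoring v = altColoring w)
    (h0AB : ∀ v w : ZMod 12, CA 0 v = CB 0 w ↔ blocksColoring v = altColoring w)
    (hCR : IsParallelCR C12 C12 CA CB) :
    (∀ t : ℕ, (Finset.univ.val.map (CA t)) = (Finset.univ.val.map (CB t))) ∧
    (∀ t : ℕ, ∃ c₁ c₂ : ℕ, c₁ ≠ c₂ ∧
      {v : ZMod 12 | CA t v = c₁}.ncard = 6 ∧ {v : ZMod 12 | CA t v = c₂}.ncard = 6) ∧
    (∀ (t : ℕ) (v w : ZMod 12), CA t v = CA t w ↔ blocksColoring v = blocksColoring w) ∧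
    (∀ (t : ℕ) (v w : ZMod 12), CB t v = CB t w ↔ altColoring v = altColoring w) := by
  have hker := hCR.ker_eq C12_isEquitableWith_blocksColoring C12_isEquitableWith_altColoring
    (ker_sumElim_eq_iff.2 ⟨h0A, h0B, h0AB⟩)
  have hA t := (ker_sumElim_eq_iff.1 (hker t)).1
  refine ⟨fun t => map_univ_eq_of_ker_sumElim_eq (hker t) (by decide), fun t => ?_, hA,
    fun t => (ker_sumElim_eq_iff.1 (hker t)).2.1⟩
  have hclass (u : ZMod 12) : {v | CA t v = CA t u}.ncard = 6 := by
    rw [Set.ext fun v => hA t v u]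
    exact ncard_blocksColoring_class u
  exact ⟨CA t 0, CA t 3, (hA t 0 3).not.2 (by decide), hclass 0, hclass 3⟩
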